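/- For c ∈ ℂ, let p_c : ℂ → ℂ be the quadratic polynomial p_c(z) = z² + c, and let p_c^[n] denote its n-th iterate. Let g ∈ ℝ with g > 0 and suppose that ‖p_c^[n](c)‖ → ∞ as n → ∞ and that 2^{−n} · Real.log ‖p_c^[n](c)‖ → g as n → ∞. Then ‖(deriv (p_c^[n]))(c)‖ → ∞ as n → ∞, and for every λ ∈ ℂ, 2^{−n} · Real.log ‖(deriv (p_c^[n]))(c) − λ‖ → g as n → ∞. -/

import Mathlib

/-!
By the chain rule `(p_cⁿ)'(c) = ∏_{k<n} 2 p_cᵏ(c)`, so `log ‖(p_cⁿ)'(c)‖` is the sum of the terms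
`log ‖2 p_cᵏ(c)‖ = 2ᵏ g + o(2ᵏ)`, which adds up to `2ⁿ g + o(2ⁿ)`. The logarithm of the product
splits because the critical orbit never hits `0`: otherwise `c` would be periodic, whereas `g > 0`
forces the orbit to escape. Since `‖(p_cⁿ)'(c)‖ → ∞`, subtracting a constant `λ` does not change
the logarithm asymptotically.
-/

open Filter Finset Asymptotics Topology

theorem HasDerivAt.iterate_prod {𝕜 : Type*} [NontriviallyNormedField 𝕜] {f f' : 𝕜 → 𝕜}
    (hf : ∀ y, HasDerivAt f (f' y) y) (x : 𝕜) (n : ℕ) :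
    HasDerivAt (f^[n]) (∏ k ∈ range n, f' (f^[k] x)) x := by
  induction n with
  | zero => simpa using hasDerivAt_id x
  | succ n ih =>
    rw [Function.iterate_succ', prod_range_succ, mul_comm]
    exact (hf _).comp x ih

theorem Function.IsPeriodicPt.not_tendsto_norm_atTop {E : Type*} [SeminormedAddCommGroup E]
    {f : E → E} {n : ℕ} {x : E} (hx : IsPeriodicPt f n x) (hn : 0 < n) :
    ¬Tendsto (fun m => ‖f^[m] x‖) atTop atTop := fun h =>
  not_tendsto_const_atTop ‖x‖ atTop <|
    (h.comp (tendsto_id.const_mul_atTop' hn)).congr fun j => congrArg norm (hx.mul_const j).eq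

theorem isPeriodicPt_of_iterate_eq_zero {M : Type*} [Zero M] {f : M → M} {x : M} {k : ℕ}
    (hf : f 0 = x) (hk : f^[k] x = 0) : Function.IsPeriodicPt f (k + 1) x := by
  rw [Function.IsPeriodicPt, Function.IsFixedPt, Function.iterate_succ_apply', hk, hf]

theorem tendsto_atTop_of_tendsto_mul_log {α : Type*} {l : Filter α} {w x : α → ℝ} {g : ℝ}
    (hw : Tendsto w l (𝓝[>] 0)) (hx : ∀ a, 0 ≤ x a) (hg : 0 < g)
    (h : Tendsto (fun a => w a * Real.log (x a)) l (𝓝 g)) : Tendsto x l atTop := by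
  have hlog : Tendsto (fun a => Real.log (x a)) l atTop := by
    refine ((tendsto_inv_nhdsGT_zero.comp hw).atTop_mul_pos hg h).congr' ?_
    filter_upwards [hw self_mem_nhdsWithin] with a ha
    exact inv_mul_cancel_left₀ (ne_of_gt ha) _
  exact tendsto_atTop_mono (fun a => Real.log_le_self (hx a)) hlog

theorem isEquivalent_norm_sub_const {α E : Type*} [SeminormedAddCommGroup E] {l : Filter α}
    {u : α → E} (hu : Tendsto (fun a => ‖u a‖) l atTop) (z₀ : E) :
    (fun a => ‖u a - z₀‖) ~[l] fun a => ‖u a‖ := by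
  refine IsBigO.trans_isLittleO (g := fun _ => (1 : ℝ)) ?_ ?_
  · refine IsBigO.of_bound ‖z₀‖ (Eventually.of_forall fun a => ?_)
    simpa [abs_sub_comm] using abs_norm_sub_norm_le (u a - z₀) (u a)
  · simpa using (isLittleO_one_left_iff ℝ).mpr hu

theorem tendsto_mul_log_norm_sub_const {α E : Type*} [SeminormedAddCommGroup E] {l : Filter α}
    {u : α → E} {w : α → ℝ} {g : ℝ} (hu : Tendsto (fun a => ‖u a‖) l atTop)
    (h : Tendsto (fun a => w a * Real.log ‖u a‖) l (𝓝 g)) (z₀ : E) :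
    Tendsto (fun a => w a * Real.log ‖u a - z₀‖) l (𝓝 g) :=
  (IsEquivalent.refl.mul ((isEquivalent_norm_sub_const hu z₀).log hu)).symm.tendsto_nhds h

theorem tendsto_inv_pow_mul_sum_range {r L : ℝ} (hr : 1 < r) {a : ℕ → ℝ}
    (h : Tendsto (fun k => (r ^ k)⁻¹ * a k) atTop (𝓝 L)) :
    Tendsto (fun n => (r ^ n)⁻¹ * ∑ k ∈ range n, a k) atTop (𝓝 (L / (r - 1))) := by
  have hr0 : 0 < r := zero_lt_one.trans hr
  have hpow : Tendsto (fun n => r ^ n) atTop atTop := tendsto_pow_atTop_atTop_of_one_lt hr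
  have hgeom : ∀ n, ∑ k ∈ range n, r ^ k = (r ^ n - 1) / (r - 1) := fun n => geom_sum_eq hr.ne' n
  have herr : (fun k => a k - L * r ^ k) =o[atTop] fun k => r ^ k := by
    have h0 := (isLittleO_one_iff ℝ).mpr (tendsto_sub_nhds_zero_iff.mpr h)
    refine ((isBigO_refl (fun k => r ^ k) atTop).mul_isLittleO h0).congr (fun k => ?_)
      fun k => mul_one _
    field_simp
  have hgeom_bigO : (fun n => ∑ k ∈ range n, r ^ k) =O[atTop] fun n => r ^ n := by
    refine IsBigO.of_bound (r - 1)⁻¹ (Eventually.of_forall fun n => ?_)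
    have : 1 ≤ r ^ n := one_le_pow₀ hr.le
    rw [hgeom, Real.norm_of_nonneg (div_nonneg (by linarith) (by linarith)),
      Real.norm_of_nonneg (by linarith), div_eq_inv_mul]
    gcongr
    linarith
  have hgeom_top : Tendsto (fun n => ∑ k ∈ range n, r ^ k) atTop atTop := by
    simpa only [hgeom, ← sub_eq_add_neg] using
      (tendsto_atTop_add_const_right _ (-1) hpow).atTop_div_const (sub_pos.mpr hr)
  have hsum : (fun n => ∑ k ∈ range n, (a k - L * r ^ k)) =o[atTop] fun n => r ^ n :=
    (herr.sum_range (fun k => (pow_pos hr0 k).le) hgeom_top).trans_isBigO hgeom_bigO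
  have hmain : Tendsto (fun n => L / (r - 1) * (1 - (r ^ n)⁻¹)) atTop (𝓝 (L / (r - 1))) := by
    simpa using ((tendsto_inv_atTop_zero.comp hpow).const_sub 1).const_mul (L / (r - 1))
  refine (zero_add (L / (r - 1)) ▸ hsum.tendsto_div_nhds_zero.add hmain).congr fun n => ?_
  have := (pow_pos hr0 n).ne'
  rw [sum_sub_distrib, ← mul_sum, hgeom]
  field_simp
  ring

theorem stmt_15_general (c : ℂ) (p : ℂ → ℂ) (hp : ∀ z : ℂ, p z = z ^ 2 + c) (g : ℝ) (hg : 0 < g)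
    (hgreen : Tendsto (fun n : ℕ => ((2 : ℝ) ^ n)⁻¹ * Real.log ‖p^[n] c‖) atTop (nhds g)) :
    Tendsto (fun n : ℕ => ‖deriv (p^[n]) c‖) atTop atTop ∧
      ∀ lam : ℂ,
        Tendsto (fun n : ℕ => ((2 : ℝ) ^ n)⁻¹ * Real.log ‖deriv (p^[n]) c - lam‖)
          atTop (nhds g) := by
  have hw : Tendsto (fun n : ℕ => ((2 : ℝ) ^ n)⁻¹) atTop (𝓝[>] 0) :=
    tendsto_inv_atTop_nhdsGT_zero.comp (tendsto_pow_atTop_atTop_of_one_lt one_lt_two)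
  have horbit : ∀ k, p^[k] c ≠ 0 := fun k hk =>
    (isPeriodicPt_of_iterate_eq_zero (by simp [hp]) hk).not_tendsto_norm_atTop k.succ_pos
      (tendsto_atTop_of_tendsto_mul_log hw (fun n => norm_nonneg _) hg hgreen)
  have hp' : ∀ y, HasDerivAt p (2 * y) y := fun y => by
    simpa [funext hp] using (hasDerivAt_pow 2 y).add_const c
  have hlog_step : Tendsto (fun k : ℕ => ((2 : ℝ) ^ k)⁻¹ * Real.log ‖2 * p^[k] c‖) atTop (𝓝 g) := by
    have h := ((hw.mono_right nhdsWithin_le_nhds).mul_const (Real.log 2)).add hgreen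
    rw [zero_mul, zero_add] at h
    refine h.congr fun k => ?_
    rw [norm_mul, Complex.norm_two, Real.log_mul two_ne_zero (norm_ne_zero_iff.mpr (horbit k)),
      mul_add]
  have hlog : Tendsto (fun n : ℕ => ((2 : ℝ) ^ n)⁻¹ * Real.log ‖deriv (p^[n]) c‖) atTop (𝓝 g) := by
    have := tendsto_inv_pow_mul_sum_range one_lt_two hlog_step
    rw [show (2 : ℝ) - 1 = 1 by norm_num, div_one] at this
    refine this.congr fun n => ?_
    rw [(HasDerivAt.iterate_prod hp' c n).deriv, norm_prod, Real.log_prod]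
    intro k _
    simp [horbit k]
  have hD := tendsto_atTop_of_tendsto_mul_log hw (fun n => norm_nonneg _) hg hlog
  exact ⟨hD, tendsto_mul_log_norm_sub_const hD hlog⟩

theorem stmt_15 (c : ℂ) (p : ℂ → ℂ) (hp : ∀ z : ℂ, p z = z ^ 2 + c) (g : ℝ) (hg : 0 < g)
    (hesc : Tendsto (fun n : ℕ => ‖p^[n] c‖) atTop atTop)
    (hgreen : Tendsto (fun n : ℕ => ((2 : ℝ) ^ n)⁻¹ * Real.log ‖p^[n] c‖) atTop (nhds g)) :
    Tendsto (fun n : ℕ => ‖deriv (p^[n]) c‖) atTop atTop ∧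
      ∀ lam : ℂ,
        Tendsto (fun n : ℕ => ((2 : ℝ) ^ n)⁻¹ * Real.log ‖deriv (p^[n]) c - lam‖)
          atTop (nhds g) :=
  stmt_15_general c p hp g hg hgreen
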